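/- arXiv:1109.4646 — 2 statements merged into one kernel-verified Lean document; each statement's English description precedes it below -/
import Mathlib

section
/- Zalcman's conjecture implies Bieberbach's conjecture: If for every function f in the class S and every integer n ≥ 2 the inequality |a_n² − a_{2n−1}| ≤ (n−1)² holds, then for every f in S and every integer n ≥ 2 one has |a_n| ≤ n. -/
open Complex Metric

/-!
If `‖a_n‖ > n` for some `n ≥ 2`, apply Zalcman's inequality in the form
`‖a_m‖² - (m - 1)² ≤ ‖a_{2m-1}‖` along the indices `m_k = 2^k (n - 1) + 1`, for which
`m_{k+1} = 2 m_k - 1`. The excess `b_k = ‖a_{m_k}‖ - m_k > 0` then satisfies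
`b_{k+1} ≥ b_k (4 + b_k)`: it grows geometrically until it exceeds `2`, and from then on it
squares at each step. So `‖a_{m_k}‖ ≥ q^{m_k}` for some `q > 1` and infinitely many `k`, which is
impossible for the Taylor coefficients of a function holomorphic on the unit disk.
-/

/-- The `n`-th Taylor coefficient of `f` at `0`. -/
noncomputable def taylorCoeff (f : ℂ → ℂ) (n : ℕ) : ℂ :=
  iteratedDeriv n f 0 / (n.factorial : ℂ)

/-- The class `S` of normalized univalent functions on the unit disk. -/
def IsClassS (f : ℂ → ℂ) : Prop :=
  DifferentiableOn ℂ f (ball (0 : ℂ) 1) ∧ Set.InjOn f (ball (0 : ℂ) 1) ∧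
    f 0 = 0 ∧ deriv f 0 = 1

lemma bddAbove_norm_taylorCoeff_mul_pow {f : ℂ → ℂ} {R r : ℝ}
    (hf : DifferentiableOn ℂ f (ball 0 R)) (hr : 0 ≤ r) (hrR : r < R) :
    BddAbove (Set.range fun p => ‖taylorCoeff f p‖ * r ^ p) := by
  have hz : (r : ℂ) ∈ ball (0 : ℂ) R := by simpa [abs_of_nonneg hr] using hrR
  have hterm : (fun p => ‖taylorCoeff f p‖ * r ^ p) =
      fun p => ‖(p.factorial : ℂ)⁻¹ • ((r : ℂ) - 0) ^ p • iteratedDeriv p f 0‖ := by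
    funext p
    simp only [taylorCoeff, div_eq_inv_mul, Complex.norm_mul, norm_inv, RCLike.norm_natCast,
      sub_zero, smul_eq_mul, norm_pow, norm_real, Real.norm_eq_abs, abs_of_nonneg hr]
    ring
  rw [hterm]
  exact (hasSum_taylorSeries_on_ball hf hz).summable.tendsto_atTop_zero.norm.bddAbove_range

lemma add_mul_four_add_le_of_sq_sub_sq_le {m b x y : ℝ} (hm : 2 ≤ m) (hb : 0 ≤ b)
    (hx : m + b ≤ x) (hy : x ^ 2 - (m - 1) ^ 2 ≤ y) : 2 * m - 1 + b * (4 + b) ≤ y := by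
  nlinarith

lemma exists_two_pow_two_pow_le {b : ℕ → ℝ} (h0 : 0 < b 0)
    (hb : ∀ k, 0 ≤ b k → b k * (4 + b k) ≤ b (k + 1)) :
    ∃ K, ∀ j, (2 : ℝ) ^ 2 ^ j ≤ b (K + j) := by
  have hgeom : ∀ k, 4 ^ k * b 0 ≤ b k := by
    intro k
    induction k with
    | zero => simp
    | succ k ih =>
      have hk : 0 ≤ b k := (mul_nonneg (by positivity) h0.le).trans ih
      calc 4 ^ (k + 1) * b 0 = 4 * (4 ^ k * b 0) := by ring
        _ ≤ b k * (4 + b k) := by nlinarith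
        _ ≤ b (k + 1) := hb k hk
  obtain ⟨K, hK⟩ := pow_unbounded_of_one_lt (2 / b 0) (by norm_num : (1 : ℝ) < 4)
  refine ⟨K, fun j => ?_⟩
  induction j with
  | zero => simpa using ((div_lt_iff₀ h0).1 hK).le.trans (hgeom K)
  | succ j ih =>
    have h2 : (2 : ℝ) ≤ 2 ^ 2 ^ j := le_self_pow₀ one_le_two (pow_ne_zero _ two_ne_zero)
    calc (2 : ℝ) ^ 2 ^ (j + 1) = (2 ^ 2 ^ j) ^ 2 := by rw [pow_succ, pow_mul]
      _ ≤ b (K + j) * (4 + b (K + j)) := by nlinarith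
      _ ≤ b (K + (j + 1)) := hb _ (by linarith)

lemma not_bddAbove_mul_pow_of_two_pow_two_pow_le {a : ℕ → ℝ} {N : ℕ → ℕ} {c : ℕ}
    (hN : ∀ j, N j ≤ 2 ^ j * c) (ha : ∀ j, (2 : ℝ) ^ 2 ^ j ≤ a (N j)) :
    ∃ r, 0 ≤ r ∧ r < 1 ∧ ¬ BddAbove (Set.range fun p => a p * r ^ p) := by
  -- `r = 1 - ε` is chosen with `r ^ c ≥ 3 / 4`, so that `2 ^ 2 ^ j * r ^ N j ≥ (3 / 2) ^ 2 ^ j`.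
  set ε : ℝ := 1 / (4 * (c + 1))
  have hε0 : 0 < ε := by positivity
  have hcε : c * ε ≤ 1 / 4 := by
    rw [mul_one_div, div_le_div_iff₀ (by positivity) (by norm_num)]
    linarith
  have hε1 : ε ≤ 1 / 4 := by
    simp only [ε]; gcongr; linarith [(Nat.cast_nonneg c : (0 : ℝ) ≤ c)]
  have hrc : 3 / 4 ≤ (1 - ε) ^ c := by
    calc (3 / 4 : ℝ) ≤ 1 + c * (-ε) := by linarith
      _ ≤ (1 - ε) ^ c := by rw [sub_eq_add_neg]; exact one_add_mul_le_pow (by linarith) c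
  refine ⟨1 - ε, by linarith, by linarith, fun ⟨C, hC⟩ => ?_⟩
  obtain ⟨j, hj⟩ := pow_unbounded_of_one_lt C (by norm_num : (1 : ℝ) < 3 / 2)
  have ha0 : 0 ≤ a (N j) := (pow_nonneg zero_le_two _).trans (ha j)
  have hgrow : (3 / 2 : ℝ) ^ j ≤ a (N j) * (1 - ε) ^ N j :=
    calc (3 / 2 : ℝ) ^ j ≤ (3 / 2) ^ 2 ^ j :=
          pow_le_pow_right₀ (by norm_num) Nat.lt_two_pow_self.le
      _ = 2 ^ 2 ^ j * (3 / 4) ^ 2 ^ j := by rw [← mul_pow]; norm_num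
      _ ≤ a (N j) * ((1 - ε) ^ c) ^ 2 ^ j :=
        mul_le_mul (ha j) (pow_le_pow_left₀ (by norm_num) hrc _) (by positivity) ha0
      _ ≤ a (N j) * (1 - ε) ^ N j := by
        rw [← pow_mul, mul_comm c]
        exact mul_le_mul_of_nonneg_left (pow_le_pow_of_le_one (by linarith) (by linarith) (hN j))
          ha0
  exact (hj.trans_le hgrow).not_ge (hC (Set.mem_range_self (N j)))

lemma exists_two_pow_two_pow_le_of_sq_sub_sq_le {a : ℕ → ℝ}
    (ha : ∀ m, 2 ≤ m → a m ^ 2 - ((m : ℝ) - 1) ^ 2 ≤ a (2 * m - 1))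
    {n : ℕ} (hn : 2 ≤ n) (hlt : n < a n) :
    ∃ K, ∀ j, (2 : ℝ) ^ 2 ^ j ≤ a (2 ^ (K + j) * (n - 1) + 1) := by
  set M : ℕ → ℕ := fun k => 2 ^ k * (n - 1) + 1
  have hM0 : M 0 = n := by simp only [M]; omega
  have hM2 (k : ℕ) : 2 ≤ M k := by
    have := Nat.mul_le_mul (Nat.one_le_two_pow (n := k)) (by omega : 1 ≤ n - 1)
    simp only [M]; omega
  have hMsucc (k : ℕ) : 2 * M k - 1 = M (k + 1) := by
    simp only [M, pow_succ]; ring_nf; omega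
  have hMsucc_cast (k : ℕ) : (M (k + 1) : ℝ) = 2 * M k - 1 := by
    rw [← hMsucc, Nat.cast_sub (by linarith [hM2 k])]; push_cast; ring
  obtain ⟨K, hK⟩ := exists_two_pow_two_pow_le (b := fun k => a (M k) - M k)
    (by simp only [hM0]; linarith) fun k hb => by
      have hy := ha _ (hM2 k)
      rw [hMsucc] at hy
      have := add_mul_four_add_le_of_sq_sub_sq_le (Nat.ofNat_le_cast.2 (hM2 k)) hb
        (by linarith) hy
      linarith [hMsucc_cast k]
  exact ⟨K, fun j => (hK j).trans (sub_le_self _ (Nat.cast_nonneg _))⟩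

/-- **Zalcman's conjecture implies Bieberbach's conjecture**: if for every `f ∈ S`
and every `n ≥ 2` one has `|a_n² − a_{2n−1}| ≤ (n−1)²`, then for every `f ∈ S` and
every `n ≥ 2` one has `|a_n| ≤ n`. -/
theorem zalcman_implies_bieberbach
    (hZ : ∀ f : ℂ → ℂ, IsClassS f → ∀ n : ℕ, 2 ≤ n →
      ‖taylorCoeff f n ^ 2 - taylorCoeff f (2 * n - 1)‖ ≤ ((n : ℝ) - 1) ^ 2) :
    ∀ f : ℂ → ℂ, IsClassS f → ∀ n : ℕ, 2 ≤ n →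
      ‖taylorCoeff f n‖ ≤ (n : ℝ) := by
  intro f hf n hn
  by_contra! hlt
  have hstep (m : ℕ) (hm : 2 ≤ m) :
      ‖taylorCoeff f m‖ ^ 2 - ((m : ℝ) - 1) ^ 2 ≤ ‖taylorCoeff f (2 * m - 1)‖ := by
    have := (norm_sub_norm_le _ _).trans (hZ f hf m hm)
    rw [norm_pow] at this
    linarith
  obtain ⟨K, hK⟩ := exists_two_pow_two_pow_le_of_sq_sub_sq_le hstep hn hlt
  have hindex (j : ℕ) : 2 ^ (K + j) * (n - 1) + 1 ≤ 2 ^ j * (2 ^ K * (n - 1) + 1) := by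
    rw [pow_add]
    nlinarith [Nat.one_le_two_pow (n := j)]
  obtain ⟨r, hr0, hr1, hunbdd⟩ :=
    not_bddAbove_mul_pow_of_two_pow_two_pow_le (a := fun p => ‖taylorCoeff f p‖) hindex hK
  exact hunbdd (bddAbove_norm_taylorCoeff_mul_pow hf.1 hr0 hr1)
end

section
/- Strict inequality for root transforms (inequality (4.1)): For all integers m ≥ 2, n ≥ 3 and every θ ∈ ℝ, the Taylor coefficients of the root transform κ_{m,θ} satisfy |a_n(κ_{m,θ})² − a_{2n−1}(κ_{m,θ})| < (n−1)². -/
/-!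
For `m ≥ 2` the exponent `a = 2/m` lies in `(0, 1]`, so the binomial coefficients
`binom(a + k - 1, k) = a(a+1)⋯(a+k-1)/k!` of `(1 - w)^{-a}` lie in `[0, 1]`. Substituting
`w = e^{iθ} z^m` and multiplying by `z` shows that every Taylor coefficient of `κ_{m,θ}` has
modulus at most `1`, hence `|a_n² - a_{2n-1}| ≤ 2 < 4 ≤ (n-1)²`.
-/

open Complex Metric

/-- The root transform `κ_{m,θ}(z) = z (1 − e^{iθ} z^m)^{−2/m}` of the Koebe
function, using the principal branch of the complex power. -/
noncomputable def rootKoebe (m : ℕ) (θ : ℝ) (z : ℂ) : ℂ :=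
  z * (1 - Complex.exp ((θ : ℂ) * I) * z ^ m) ^ (-(2 : ℂ) / (m : ℂ))

open scoped Nat
open Function

lemma ascPochhammer_eval_nonneg {S : Type*} [Semiring S] [PartialOrder S] [IsOrderedRing S]
    {a : S} (ha : 0 ≤ a) : ∀ n : ℕ, 0 ≤ (ascPochhammer S n).eval a
  | 0 => by simp
  | n + 1 => by
    rw [ascPochhammer_succ_eval]
    exact mul_nonneg (ascPochhammer_eval_nonneg ha n) (by positivity)

lemma ascPochhammer_eval_le_factorial {a : ℝ} (ha₀ : 0 ≤ a) (ha₁ : a ≤ 1) :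
    ∀ n : ℕ, (ascPochhammer ℝ n).eval a ≤ n !
  | 0 => by simp
  | n + 1 => by
    rw [ascPochhammer_succ_eval, Nat.factorial_succ, Nat.cast_mul, mul_comm ((n + 1 : ℕ) : ℝ)]
    gcongr
    · exact ascPochhammer_eval_le_factorial ha₀ ha₁ n
    · push_cast; linarith

lemma Ring.choose_add_sub_one_eq_ascPochhammer_div {K : Type*} [Field K] [CharZero K] (a : K)
    (n : ℕ) : Ring.choose (a + n - 1) n = (ascPochhammer K n).eval a / n ! := by
  rw [eq_div_iff (by exact_mod_cast n.factorial_ne_zero), mul_comm, ← nsmul_eq_mul,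
    ← Ring.multichoose_eq, Ring.factorial_nsmul_multichoose_eq_ascPochhammer,
    Polynomial.ascPochhammer_smeval_eq_eval]

lemma norm_choose_add_sub_one_le_one {a : ℝ} (ha₀ : 0 ≤ a) (ha₁ : a ≤ 1) (n : ℕ) :
    ‖Ring.choose ((a : ℂ) + n - 1) n‖ ≤ 1 := by
  have h₀ : 0 ≤ (ascPochhammer ℝ n).eval a / n ! :=
    div_nonneg (ascPochhammer_eval_nonneg ha₀ n) (by positivity)
  rw [show (a : ℂ) + n - 1 = ((a + n - 1 : ℝ) : ℂ) by push_cast; ring,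
    ← Complex.ofReal_choose, norm_real, Ring.choose_add_sub_one_eq_ascPochhammer_div,
    Real.norm_of_nonneg h₀, div_le_one (by positivity)]
  exact ascPochhammer_eval_le_factorial ha₀ ha₁ n

lemma Function.Injective.hasSum_extend_mul_pow {R : Type*} [Semiring R] [TopologicalSpace R]
    {g : ℕ → ℕ} (hg : Injective g) {c : ℕ → R} {z s : R}
    (h : HasSum (fun k => c k * z ^ g k) s) :
    HasSum (fun j => extend g c 0 j * z ^ j) s := by
  rw [← hasSum_extend_zero hg] at h
  refine h.congr_fun fun j => ?_
  by_cases hj : ∃ k, g k = j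
  · obtain ⟨k, rfl⟩ := hj
    simp [hg.extend_apply]
  · simp [extend_apply' _ _ _ hj]

lemma HasFPowerSeriesOnBall.taylorCoeff_eq {f : ℂ → ℂ} {c : ℕ → ℂ} {r : ENNReal}
    (h : HasFPowerSeriesOnBall f (FormalMultilinearSeries.ofScalars ℂ c) 0 r) (n : ℕ) :
    taylorCoeff f n = c n := by
  have := h.factorial_smul 1 n
  rw [iteratedFDeriv_apply_eq_iteratedDeriv_mul_prod,
    FormalMultilinearSeries.ofScalars_apply_eq] at this
  simp only [Finset.prod_const_one, one_pow, smul_eq_mul, mul_one, one_mul, nsmul_eq_mul] at this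
  rw [taylorCoeff, ← this, mul_div_cancel_left₀ _ (by exact_mod_cast n.factorial_ne_zero)]

lemma mul_add_one_injective {m : ℕ} (hm : m ≠ 0) : Injective fun k : ℕ => m * k + 1 :=
  fun k l hkl => by simpa [hm] using hkl

noncomputable def rootKoebeCoeff (m : ℕ) (θ : ℝ) : ℕ → ℂ :=
  extend (fun k => m * k + 1) (fun k => Ring.choose ((2 / m : ℂ) + k - 1) k * exp (θ * I) ^ k) 0

lemma hasSum_rootKoebe {m : ℕ} (hm : 0 < m) (θ : ℝ) {z : ℂ} (hz : ‖z‖ < 1) :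
    HasSum (fun j => rootKoebeCoeff m θ j * z ^ j) (rootKoebe m θ z) := by
  set w := exp (θ * I) * z ^ m
  have hw : w ∈ eball (0 : ℂ) 1 := by
    rw [mem_eball_zero_iff, ← ofReal_norm, ENNReal.ofReal_lt_one, norm_mul,
      norm_exp_ofReal_mul_I, one_mul, norm_pow]
    exact pow_lt_one₀ (norm_nonneg z) hz hm.ne'
  have hbinom := ((one_div_one_sub_cpow_hasFPowerSeriesOnBall_zero (2 / m)).hasSum hw).mul_left z
  have hκ : rootKoebe m θ z = z * (1 / (1 - (0 + w)) ^ (2 / m : ℂ)) := by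
    rw [zero_add, one_div, ← cpow_neg, ← neg_div]
    rfl
  refine (mul_add_one_injective hm.ne').hasSum_extend_mul_pow ?_
  rw [hκ]
  refine hbinom.congr_fun fun k => ?_
  rw [FormalMultilinearSeries.ofScalars_apply_eq, smul_eq_mul, mul_pow, ← pow_mul, pow_succ]
  ring

lemma hasFPowerSeriesOnBall_rootKoebe {m : ℕ} (hm : 0 < m) (θ : ℝ) :
    HasFPowerSeriesOnBall (rootKoebe m θ)
      (FormalMultilinearSeries.ofScalars ℂ (rootKoebeCoeff m θ)) 0 1 where
  r_le := by
    refine ENNReal.le_of_forall_nnreal_lt fun r hr =>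
      FormalMultilinearSeries.le_radius_of_tendsto (l := 0) _ ?_
    have hr' : ‖(r : ℂ)‖ < 1 := by simpa using hr
    simpa [FormalMultilinearSeries.ofScalars_norm] using
      (hasSum_rootKoebe hm θ hr').summable.tendsto_atTop_zero.norm
  r_pos := one_pos
  hasSum {y} hy := by
    rw [mem_eball_zero_iff, ← ofReal_norm, ENNReal.ofReal_lt_one] at hy
    simpa [FormalMultilinearSeries.ofScalars_apply_eq, mul_comm] using hasSum_rootKoebe hm θ hy

lemma norm_rootKoebeCoeff_le_one {m : ℕ} (hm : 2 ≤ m) (θ : ℝ) (j : ℕ) :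
    ‖rootKoebeCoeff m θ j‖ ≤ 1 := by
  by_cases hj : ∃ k, m * k + 1 = j
  · obtain ⟨k, rfl⟩ := hj
    rw [rootKoebeCoeff, (mul_add_one_injective (by omega)).extend_apply, norm_mul, norm_pow,
      norm_exp_ofReal_mul_I, one_pow, mul_one,
      show (2 / m : ℂ) = ((2 / m : ℝ) : ℂ) by push_cast; rfl]
    refine norm_choose_add_sub_one_le_one (by positivity) ?_ k
    rw [div_le_one (by positivity)]
    exact_mod_cast hm
  · simp [rootKoebeCoeff, extend_apply' _ _ _ hj]

/-- **Inequality (4.1)**: for all integers `m ≥ 2`, `n ≥ 3` and every `θ ∈ ℝ`,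
the root transform `κ_{m,θ}` satisfies the strict Zalcman inequality
`|a_n(κ_{m,θ})² − a_{2n−1}(κ_{m,θ})| < (n−1)²`. -/
theorem zalcman_strict_for_root_transforms (m n : ℕ) (hm : 2 ≤ m) (hn : 3 ≤ n) (θ : ℝ) :
    ‖taylorCoeff (rootKoebe m θ) n ^ 2 - taylorCoeff (rootKoebe m θ) (2 * n - 1)‖ <
      ((n : ℝ) - 1) ^ 2 := by
  have hκ := hasFPowerSeriesOnBall_rootKoebe (by omega : 0 < m) θ
  rw [hκ.taylorCoeff_eq, hκ.taylorCoeff_eq]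
  have hn' : (3 : ℝ) ≤ n := by exact_mod_cast hn
  calc _ ≤ ‖rootKoebeCoeff m θ n‖ ^ 2 + ‖rootKoebeCoeff m θ (2 * n - 1)‖ :=
        (norm_sub_le _ _).trans_eq (by rw [norm_pow])
    _ ≤ 1 ^ 2 + 1 := by
        gcongr <;> exact norm_rootKoebeCoeff_le_one hm θ _
    _ < ((n : ℝ) - 1) ^ 2 := by nlinarith
end
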